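/- Let G be a finite group, H ≤ G a subgroup, and T ⊆ G a set of representatives for the right cosets Hσ with Hσ ≠ H. Write H̃ = Σ_{h∈H} h ∈ ℤ[G]. Then the H-fixed submodule (I_G)^H of the augmentation ideal I_G equals H̃·I_G, the elements H̃·(σ − 1) for σ ∈ T form a ℤ-basis of (I_G)^H, and the determinant of the ((G:H)−1) × ((G:H)−1) matrix with entries (1/|H|)·(H̃(σ−1), H̃(τ−1)) for σ, τ ∈ T equals the index (G:H), where (·,·) is the bilinear form on ℤ[G] determined by (g, g') = δ_{g,g'} for g, g' ∈ G. -/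

import Mathlib

open scoped BigOperators

noncomputable section

-- The element H̃ = ∑_{h ∈ H} h of ℤ[G], for a subgroup H of G.
open Classical in
def hTilde {G : Type} [Group G] [Fintype G] (H : Subgroup G) : MonoidAlgebra ℤ G :=
  ∑ h ∈ Finset.univ.filter (fun g => g ∈ H), MonoidAlgebra.single h 1

/-- The augmentation ideal I_G of ℤ[G], i.e. the kernel of the augmentation map
ℤ[G] → ℤ, ∑ a_g g ↦ ∑ a_g. -/
def augIdeal (G : Type) [Group G] : Ideal (MonoidAlgebra ℤ G) :=
  RingHom.ker ((MonoidAlgebra.lift ℤ ℤ G 1 : MonoidAlgebra ℤ G →ₐ[ℤ] ℤ) : MonoidAlgebra ℤ G →+* ℤ)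

/-- The H-fixed points of a ℤ[G]-module, as an additive subgroup. -/
def fixedAddSubgroup {G : Type} [Group G] (H : Subgroup G) (M : Type*) [AddCommGroup M]
    [Module (MonoidAlgebra ℤ G) M] : AddSubgroup M where
  carrier := {x | ∀ h ∈ H, (MonoidAlgebra.single h 1 : MonoidAlgebra ℤ G) • x = x}
  zero_mem' := by intro h _; simp
  add_mem' := by intro a b ha hb h hh; rw [smul_add, ha h hh, hb h hh]
  neg_mem' := by intro a ha h hh; rw [smul_neg, ha h hh]

/-- The bilinear extension of (g,g') = δ_{g,g'} on ℚ[G]. -/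
def deltaForm (G : Type) [Group G] [Fintype G] (x y : MonoidAlgebra ℚ G) : ℚ :=
  ∑ g : G, x.coeff g * y.coeff g

/-- The canonical map ℤ[G] → ℚ[G]. -/
def intToRat (G : Type) [Group G] (x : MonoidAlgebra ℤ G) : MonoidAlgebra ℚ G :=
  MonoidAlgebra.ofCoeff (Finsupp.mapRange (Int.cast) (by simp) x.coeff)

section Aux

variable {G : Type} [Group G] [Fintype G] [DecidableEq G] (H : Subgroup G)

def eelt (σ : G) : MonoidAlgebra ℤ G := hTilde H * (MonoidAlgebra.single σ 1 - 1)

lemma zsmul_apply' (c : ℤ) (y : MonoidAlgebra ℤ G) (g : G) : (c • y).coeff g = c * y.coeff g := rfl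

open Classical in
lemma hTilde_apply (g : G) : (hTilde H).coeff g = if g ∈ H then 1 else 0 := by
  classical
  rw [hTilde, MonoidAlgebra.coeff_sum, Finsupp.finset_sum_apply]
  simp [MonoidAlgebra.coeff_single, Finsupp.single_apply]

open Classical in
lemma eelt_apply (σ g : G) :
    (eelt H σ).coeff g = (if g * σ⁻¹ ∈ H then 1 else 0) - (if g ∈ H then 1 else 0) := by
  classical
  rw [eelt, mul_sub, mul_one, MonoidAlgebra.coeff_sub, Finsupp.sub_apply,
    MonoidAlgebra.coeff_mul_single_apply,
    hTilde_apply, hTilde_apply, mul_one]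

lemma aug_eq_sum (x : MonoidAlgebra ℤ G) :
    MonoidAlgebra.lift ℤ ℤ G 1 x = ∑ g : G, x.coeff g := by
  rw [MonoidAlgebra.lift_apply]
  rw [Finsupp.sum]
  simp only [MonoidHom.one_apply, smul_eq_mul, mul_one]
  exact Finset.sum_subset (Finset.subset_univ _)
    (fun g _ hg => Finsupp.notMem_support_iff.mp hg)

lemma eelt_mem_aug (σ : G) : eelt H σ ∈ augIdeal G := by
  have : (MonoidAlgebra.lift ℤ ℤ G 1) (MonoidAlgebra.single σ (1:ℤ) - 1) = 0 := by
    rw [map_sub, MonoidAlgebra.lift_single, map_one]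
    simp
  show ((MonoidAlgebra.lift ℤ ℤ G 1 : MonoidAlgebra ℤ G →ₐ[ℤ] ℤ) :
      MonoidAlgebra ℤ G →+* ℤ) (eelt H σ) = 0
  rw [eelt, map_mul]
  simp [this]

lemma single_sub_one_mem_aug (σ : G) :
    MonoidAlgebra.single σ (1:ℤ) - 1 ∈ augIdeal G := by
  have h : (MonoidAlgebra.lift ℤ ℤ G 1) (MonoidAlgebra.single σ (1:ℤ) - 1) = 0 := by
    rw [map_sub, MonoidAlgebra.lift_single, map_one]
    simp
  exact h

lemma single_mul_hTilde {h : G} (hh : h ∈ H) :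
    MonoidAlgebra.single h (1:ℤ) * hTilde H = hTilde H := by
  classical
  ext g
  rw [MonoidAlgebra.coeff_single_mul_apply, one_mul, hTilde_apply, hTilde_apply]
  congr 1
  · simp only [eq_iff_iff]
    constructor
    · intro hm
      have := H.mul_mem hh hm
      simpa using this
    · intro hm
      exact H.mul_mem (H.inv_mem hh) hm

lemma eelt_fixed {h : G} (hh : h ∈ H) (σ : G) :
    MonoidAlgebra.single h (1:ℤ) * eelt H σ = eelt H σ := by
  rw [eelt, ← mul_assoc, single_mul_hTilde H hh]

lemma fixed_const {y : MonoidAlgebra ℤ G}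
    (hy : ∀ h ∈ H, MonoidAlgebra.single h (1:ℤ) * y = y) :
    ∀ h ∈ H, ∀ g : G, y.coeff (h * g) = y.coeff g := by
  intro h hh g
  have h2 := congrArg (fun z : MonoidAlgebra ℤ G => z.coeff (h * g)) (hy h hh)
  simpa [MonoidAlgebra.coeff_single_mul_apply, inv_mul_cancel_left] using h2.symm

variable (T : Finset G)

lemma one_not_mem (hT1 : ∀ σ ∈ T, σ ∉ H) : (1:G) ∉ T :=
  fun h => hT1 1 h H.one_mem

lemma unique_rep (hT1 : ∀ σ ∈ T, σ ∉ H)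
    (hT2 : ∀ g : G, g ∉ H → ∃! σ, σ ∈ T ∧ g * σ⁻¹ ∈ H) (g : G) :
    ∃! σ, σ ∈ insert 1 T ∧ g * σ⁻¹ ∈ H := by
  by_cases hg : g ∈ H
  · refine ⟨1, ⟨Finset.mem_insert_self _ _, by simpa using hg⟩, ?_⟩
    rintro τ ⟨hτ, hgτ⟩
    rcases Finset.mem_insert.mp hτ with h1 | h2
    · exact h1
    · exfalso
      apply hT1 τ h2
      have : (g * τ⁻¹)⁻¹ * g ∈ H := H.mul_mem (H.inv_mem hgτ) hg
      simpa [mul_assoc] using this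
  · obtain ⟨σ, ⟨hσT, hσ⟩, huniq⟩ := hT2 g hg
    refine ⟨σ, ⟨Finset.mem_insert_of_mem hσT, hσ⟩, ?_⟩
    rintro τ ⟨hτ, hgτ⟩
    rcases Finset.mem_insert.mp hτ with rfl | h2
    · exact absurd (by simpa using hgτ) hg
    · exact huniq τ ⟨h2, hgτ⟩

open Classical in
lemma card_coset (σ : G) :
    (Finset.univ.filter fun g => g * σ⁻¹ ∈ H).card = Nat.card H := by
  classical
  rw [Nat.card_eq_fintype_card]
  rw [← Fintype.card_coe]
  apply Fintype.card_congr
  refine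
    { toFun := fun g => ⟨(g : G) * σ⁻¹, (Finset.mem_filter.mp g.2).2⟩
      invFun := fun h => ⟨(h : G) * σ, by simp⟩
      left_inv := by intro g; ext; simp
      right_inv := by intro h; ext; simp }

lemma sum_coset (hT1 : ∀ σ ∈ T, σ ∉ H)
    (hT2 : ∀ g : G, g ∉ H → ∃! σ, σ ∈ T ∧ g * σ⁻¹ ∈ H)
    {M : Type*} [AddCommMonoid M] (f : G → M) (hf : ∀ h ∈ H, ∀ g, f (h * g) = f g) :
    ∑ g : G, f g = ∑ σ ∈ insert 1 T, (Nat.card H) • f σ := by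
  classical
  have hcover : (Finset.univ : Finset G) =
      (insert 1 T).biUnion (fun σ => Finset.univ.filter fun g => g * σ⁻¹ ∈ H) := by
    ext g
    simp only [Finset.mem_univ, true_iff, Finset.mem_biUnion, Finset.mem_filter, true_and]
    obtain ⟨σ, hσ, -⟩ := unique_rep H T hT1 hT2 g
    exact ⟨σ, hσ.1, hσ.2⟩
  rw [show (∑ g : G, f g) = ∑ g ∈ (Finset.univ : Finset G), f g from rfl, hcover,
    Finset.sum_biUnion]
  · refine Finset.sum_congr rfl fun σ hσ => ?_
    have : ∑ g ∈ Finset.univ.filter (fun g => g * σ⁻¹ ∈ H), f g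
        = ∑ h ∈ Finset.univ.filter (fun g => g ∈ H), f (h * σ) := by
      refine Finset.sum_nbij' (fun g => g * σ⁻¹) (fun h => h * σ) ?_ ?_ ?_ ?_ ?_
      · intro a ha; simp only [Finset.mem_filter, Finset.mem_univ, true_and] at ha ⊢; exact ha
      · intro a ha; simp only [Finset.mem_filter, Finset.mem_univ, true_and] at ha ⊢
        simpa [mul_assoc] using ha
      · intro a _; simp [mul_assoc]
      · intro a _; simp [mul_assoc]
      · intro a _; simp [mul_assoc]
    rw [this]
    rw [Finset.sum_congr rfl (fun h hh => hf h (by simpa using hh) σ), Finset.sum_const]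
    congr 1
    rw [Nat.card_eq_fintype_card, Fintype.card_subtype]
  · intro σ hσ τ hτ hne
    simp only [Function.onFun]
    rw [Finset.disjoint_left]
    intro g hgσ hgτ
    simp only [Finset.mem_filter, Finset.mem_univ, true_and] at hgσ hgτ
    obtain ⟨w, hw, huniq⟩ := unique_rep H T hT1 hT2 g
    exact hne (((huniq σ ⟨hσ, hgσ⟩).trans (huniq τ ⟨hτ, hgτ⟩).symm))


lemma not_coset_of_memH (hT1 : ∀ σ ∈ T, σ ∉ H) {g : G} (hg : g ∈ H) :
    ∀ σ ∈ T, g * σ⁻¹ ∉ H := by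
  intro σ hσ hm
  apply hT1 σ hσ
  have : (g * σ⁻¹)⁻¹ * g ∈ H := H.mul_mem (H.inv_mem hm) hg
  simpa [mul_assoc] using this

open Classical in
lemma fixed_eq_sum (hT1 : ∀ σ ∈ T, σ ∉ H)
    (hT2 : ∀ g : G, g ∉ H → ∃! σ, σ ∈ T ∧ g * σ⁻¹ ∈ H)
    (x : MonoidAlgebra ℤ G) (hx : x ∈ augIdeal G)
    (hfix : ∀ h ∈ H, ∀ g : G, x.coeff (h * g) = x.coeff g) :
    x = ∑ σ ∈ T, x.coeff σ • eelt H σ := by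
  classical
  have hsum : ∑ g : G, x.coeff g = 0 := by
    rw [← aug_eq_sum]
    exact hx
  have h1T : (1:G) ∉ T := one_not_mem H T hT1
  have hcoset := sum_coset H T hT1 hT2 (fun g => x.coeff g) hfix
  rw [hsum, Finset.sum_insert h1T] at hcoset
  have hcardpos : 0 < Nat.card H := Nat.card_pos
  have hx1 : x.coeff 1 = - ∑ σ ∈ T, x.coeff σ := by
    have h2 : (Nat.card H : ℤ) * (x.coeff 1 + ∑ σ ∈ T, x.coeff σ) = 0 := by
      rw [mul_add, Finset.mul_sum]
      have := hcoset.symm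
      simpa [nsmul_eq_mul] using this
    have := mul_eq_zero.mp h2
    rcases this with h | h
    · exact absurd h (by exact_mod_cast hcardpos.ne')
    · linarith [h]
  ext g
  rw [MonoidAlgebra.coeff_sum, Finsupp.finset_sum_apply]
  simp only [zsmul_apply', eelt_apply]
  by_cases hg : g ∈ H
  · have hno := not_coset_of_memH H T hT1 hg
    rw [Finset.sum_congr rfl (fun σ hσ => by
      rw [if_neg (hno σ hσ), if_pos hg, zero_sub, mul_neg_one])]
    have hxg : x.coeff g = x.coeff 1 := by
      have := hfix g hg 1
      simpa using this
    rw [hxg, hx1, Finset.sum_neg_distrib]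
  · obtain ⟨σ₀, ⟨hσ₀T, hσ₀⟩, huniq⟩ := hT2 g hg
    have hxg : x.coeff g = x.coeff σ₀ := by
      have := hfix (g * σ₀⁻¹) hσ₀ σ₀
      simpa [mul_assoc] using this
    rw [Finset.sum_congr rfl (fun σ hσ => by
      rw [if_neg hg, sub_zero,
        show (if g * σ⁻¹ ∈ H then (1:ℤ) else 0) = if σ = σ₀ then 1 else 0 from by
          by_cases he : σ = σ₀
          · subst he; rw [if_pos hσ₀, if_pos rfl]
          · rw [if_neg he, if_neg (fun hm => he (huniq σ ⟨hσ, hm⟩))]])]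
    simp only [mul_ite, mul_one, mul_zero]
    rw [Finset.sum_ite_eq' T σ₀ (fun σ => x.coeff σ), if_pos hσ₀T, hxg]


open Classical in
lemma eelt_apply_one {σ : G} (hσ : σ ∉ H) : (eelt H σ).coeff 1 = -1 := by
  rw [eelt_apply, if_pos H.one_mem, if_neg (by simpa using hσ)]
  ring

open Classical in
lemma eelt_apply_T (hT1 : ∀ σ ∈ T, σ ∉ H)
    (hT2 : ∀ g : G, g ∉ H → ∃! σ, σ ∈ T ∧ g * σ⁻¹ ∈ H)
    {σ τ : G} (hσ : σ ∈ T) (hτ : τ ∈ T) :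
    (eelt H σ).coeff τ = if τ = σ then 1 else 0 := by
  rw [eelt_apply, if_neg (hT1 τ hτ), sub_zero]
  congr 1
  simp only [eq_iff_iff]
  constructor
  · intro hm
    obtain ⟨w, -, huniq⟩ := hT2 τ (hT1 τ hτ)
    rw [huniq τ ⟨hτ, by simpa using H.one_mem⟩]
    exact (huniq σ ⟨hσ, hm⟩).symm
  · rintro rfl
    simpa using H.one_mem

lemma eelt_const (σ : G) : ∀ h ∈ H, ∀ g : G, (eelt H σ).coeff (h * g) = (eelt H σ).coeff g :=
  fixed_const H (fun h hh => eelt_fixed H hh σ)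

open Classical in
lemma delta_eelt (hT1 : ∀ σ ∈ T, σ ∉ H)
    (hT2 : ∀ g : G, g ∉ H → ∃! σ, σ ∈ T ∧ g * σ⁻¹ ∈ H)
    {σ τ : G} (hσ : σ ∈ T) (hτ : τ ∈ T) :
    ∑ g : G, (((eelt H σ).coeff g : ℤ) : ℚ) * (((eelt H τ).coeff g : ℤ) : ℚ)
      = (Nat.card H : ℚ) * (1 + if σ = τ then 1 else 0) := by
  classical
  have hconst : ∀ h ∈ H, ∀ g : G,
      (((eelt H σ).coeff (h*g) : ℤ) : ℚ) * (((eelt H τ).coeff (h*g) : ℤ) : ℚ)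
        = (((eelt H σ).coeff g : ℤ) : ℚ) * (((eelt H τ).coeff g : ℤ) : ℚ) := by
    intro h hh g
    rw [eelt_const H σ h hh g, eelt_const H τ h hh g]
  rw [sum_coset H T hT1 hT2 _ hconst, Finset.sum_insert (one_not_mem H T hT1)]
  rw [eelt_apply_one H (hT1 σ hσ), eelt_apply_one H (hT1 τ hτ)]
  have hterm : ∀ w ∈ T, (((eelt H σ).coeff w : ℤ) : ℚ) * (((eelt H τ).coeff w : ℤ) : ℚ)
      = if w = σ then (if w = τ then 1 else 0) else 0 := by
    intro w hw
    rw [eelt_apply_T H T hT1 hT2 hσ hw, eelt_apply_T H T hT1 hT2 hτ hw]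
    by_cases h1 : w = σ <;> by_cases h2 : w = τ <;> simp [h1, h2]
  rw [Finset.sum_congr rfl (fun w hw => congrArg (Nat.card ↥H • ·) (hterm w hw))]
  rw [← Finset.smul_sum, Finset.sum_ite_eq' T σ (fun w => if w = τ then (1:ℚ) else 0),
    if_pos hσ]
  by_cases he : σ = τ <;> simp [he, nsmul_eq_mul] <;> ring

lemma card_G_eq (hT1 : ∀ σ ∈ T, σ ∉ H)
    (hT2 : ∀ g : G, g ∉ H → ∃! σ, σ ∈ T ∧ g * σ⁻¹ ∈ H) :
    Fintype.card G = (T.card + 1) * Nat.card H := by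
  have := sum_coset H T hT1 hT2 (fun _ => (1:ℕ)) (fun _ _ _ => rfl)
  simp only [Finset.sum_const, Finset.card_univ, smul_eq_mul, mul_one] at this
  rw [this, Finset.card_insert_of_notMem (one_not_mem H T hT1)]

lemma index_eq (hT1 : ∀ σ ∈ T, σ ∉ H)
    (hT2 : ∀ g : G, g ∉ H → ∃! σ, σ ∈ T ∧ g * σ⁻¹ ∈ H) :
    H.index = T.card + 1 := by
  have h1 : H.index * Nat.card H = (T.card + 1) * Nat.card H := by
    rw [H.index_mul_card, Nat.card_eq_fintype_card, card_G_eq H T hT1 hT2]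
  exact Nat.eq_of_mul_eq_mul_right Nat.card_pos h1

end Aux

set_option maxHeartbeats 2000000
set_option synthInstance.maxHeartbeats 1000000

/-- For a subgroup H of a finite group G and a transversal T of the nontrivial right cosets of
H: the H-fixed submodule of the augmentation ideal I_G equals H̃·I_G; the elements H̃(σ−1),
σ ∈ T, form a ℤ-basis of it; and the Gram determinant of (1/|H|)·(·,·) on this basis equals
the index (G:H). -/
theorem augmentation_ideal_fixed_basis_and_gram_det
    (G : Type) [Group G] [Fintype G] [DecidableEq G] (H : Subgroup G) (T : Finset G)
    (hT1 : ∀ σ ∈ T, σ ∉ H)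
    (hT2 : ∀ g : G, g ∉ H → ∃! σ, σ ∈ T ∧ g * σ⁻¹ ∈ H) :
    (∀ x : augIdeal G, x ∈ fixedAddSubgroup H (augIdeal G) ↔
        ∃ y ∈ augIdeal G, (x : MonoidAlgebra ℤ G) = hTilde H * y) ∧
    (∃ b : Module.Basis T ℤ (fixedAddSubgroup H (augIdeal G)),
        ∀ σ : T, ((b σ : augIdeal G) : MonoidAlgebra ℤ G) =
          hTilde H * (MonoidAlgebra.single (σ : G) 1 - 1)) ∧
    Matrix.det (Matrix.of fun (σ τ : T) =>
        ((Nat.card H : ℚ))⁻¹ * deltaForm G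
          (intToRat G (hTilde H * (MonoidAlgebra.single (σ : G) 1 - 1)))
          (intToRat G (hTilde H * (MonoidAlgebra.single (τ : G) 1 - 1)))) =
      (H.index : ℚ) := by
  classical
  -- auxiliary: the evaluation hom
  set F := fixedAddSubgroup H (augIdeal G) with hF
  let φ : F →+ MonoidAlgebra ℤ G :=
    { toFun := fun x => ((x : augIdeal G) : MonoidAlgebra ℤ G)
      map_zero' := rfl
      map_add' := fun _ _ => rfl }
  let φL : F →ₗ[ℤ] MonoidAlgebra ℤ G := φ.toIntLinearMap
  have hφinj : Function.Injective φL := fun a b hab => Subtype.ext (Subtype.ext hab)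
  have haug : ∀ x : F, φL x ∈ augIdeal G := fun x => (x : augIdeal G).2
  have hfixmul : ∀ x : F, ∀ h ∈ H, MonoidAlgebra.single h (1:ℤ) * φL x = φL x :=
    fun x h hh => congrArg Subtype.val (x.2 h hh)
  have hconst : ∀ x : F, ∀ h ∈ H, ∀ g : G, (φL x).coeff (h * g) = (φL x).coeff g :=
    fun x => fixed_const H (hfixmul x)
  have hrep : ∀ x : F, φL x = ∑ σ ∈ T, (φL x).coeff σ • eelt H σ :=
    fun x => fixed_eq_sum H T hT1 hT2 (φL x) (haug x) (hconst x)
  -- the candidate basis vectors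
  let v : T → F := fun σ =>
    ⟨⟨eelt H σ.1, eelt_mem_aug H σ.1⟩, fun h hh => Subtype.ext (eelt_fixed H hh σ.1)⟩
  have hφv : ∀ σ : T, φL (v σ) = eelt H σ.1 := fun _ => rfl
  -- part 1
  have part1 : ∀ x : augIdeal G, x ∈ F ↔
      ∃ y ∈ augIdeal G, (x : MonoidAlgebra ℤ G) = hTilde H * y := by
    intro x
    constructor
    · intro hx
      refine ⟨∑ σ ∈ T, (x : MonoidAlgebra ℤ G).coeff σ • (MonoidAlgebra.single σ (1:ℤ) - 1),
        ?_, ?_⟩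
      · exact Submodule.sum_mem _ fun σ _ =>
          zsmul_mem (single_sub_one_mem_aug σ) _
      · have hx' := fixed_eq_sum H T hT1 hT2 (x : MonoidAlgebra ℤ G) x.2
          (fixed_const H (fun h hh => congrArg Subtype.val (hx h hh)))
        rw [Finset.mul_sum]
        rw [Finset.sum_congr rfl (fun σ _ => (mul_smul_comm _ _ _ :
          hTilde H * ((x : MonoidAlgebra ℤ G).coeff σ • (MonoidAlgebra.single σ (1:ℤ) - 1)) = _))]
        exact hx'
    · rintro ⟨y, -, hxy⟩
      intro h hh
      apply Subtype.ext
      show MonoidAlgebra.single h (1:ℤ) * (x : MonoidAlgebra ℤ G) = x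
      rw [hxy, ← mul_assoc, single_mul_hTilde H hh]
  -- part 2 : the basis
  have hli : LinearIndependent ℤ v := by
    refine LinearIndependent.of_comp φL ?_
    have h2 : LinearIndependent ℤ (fun σ : T => eelt H σ.1) := by
      rw [Fintype.linearIndependent_iff]
      intro c hc i
      have key : (∑ σ : {x // x ∈ T}, c σ • eelt H ↑σ).coeff i.1 = c i := by
        rw [MonoidAlgebra.coeff_sum, Finsupp.finset_sum_apply]
        have hterm : ∀ σ : {x // x ∈ T}, σ ∈ (Finset.univ : Finset _) →
            (c σ • eelt H ↑σ).coeff i.1 = if σ = i then c σ else 0 := by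
          intro σ _
          have hσ : (c σ • eelt H ↑σ).coeff i.1 = c σ * (eelt H ↑σ).coeff i.1 := rfl
          rw [hσ, eelt_apply_T H T hT1 hT2 σ.2 i.2]
          by_cases he : σ = i
          · subst he; simp
          · rw [if_neg (fun hc' => he (Subtype.ext hc'.symm)), mul_zero, if_neg he]
        rw [Finset.sum_congr rfl hterm,
          Finset.sum_ite_eq' Finset.univ i c, if_pos (Finset.mem_univ i)]
      rw [hc] at key
      simpa using key.symm
    exact h2
  have hspan : ⊤ ≤ Submodule.span ℤ (Set.range v) := by
    rintro x -
    have hx : x = ∑ σ : T, (φL x).coeff σ.1 • v σ := by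
      apply hφinj
      rw [map_sum]
      rw [Finset.sum_congr rfl (fun σ _ => map_smul φL _ _)]
      simp only [hφv]
      rw [Finset.sum_coe_sort T (fun σ => (φL x).coeff σ • eelt H σ)]
      exact hrep x
    rw [hx]
    exact Submodule.sum_mem _ fun σ _ =>
      Submodule.smul_mem _ _ (Submodule.subset_span ⟨σ, rfl⟩)
  have part2 : ∃ b : Module.Basis T ℤ F,
      ∀ σ : T, ((b σ : augIdeal G) : MonoidAlgebra ℤ G) =
        hTilde H * (MonoidAlgebra.single (σ : G) 1 - 1) := by
    refine ⟨Module.Basis.mk hli hspan, fun σ => ?_⟩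
    rw [Module.Basis.mk_apply]
    rfl
  refine ⟨part1, part2, ?_⟩
  -- part 3
  have hcard0 : (Nat.card H : ℚ) ≠ 0 := by
    exact_mod_cast (Nat.card_pos (α := H)).ne'
  have hmat : (Matrix.of fun (σ τ : T) =>
        ((Nat.card H : ℚ))⁻¹ * deltaForm G
          (intToRat G (hTilde H * (MonoidAlgebra.single (σ : G) 1 - 1)))
          (intToRat G (hTilde H * (MonoidAlgebra.single (τ : G) 1 - 1))))
      = 1 + Matrix.replicateCol Unit (fun _ => (1:ℚ)) * Matrix.replicateRow Unit (fun _ => (1:ℚ)) := by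
    ext i j
    have hdf : deltaForm G (intToRat G (eelt H i.1)) (intToRat G (eelt H j.1))
        = (Nat.card H : ℚ) * (1 + if (i:G) = (j:G) then 1 else 0) := by
      rw [deltaForm]
      rw [Finset.sum_congr rfl (fun g _ => by
        rw [show (intToRat G (eelt H i.1)).coeff g = (((eelt H i.1).coeff g : ℤ) : ℚ) from
            Finsupp.mapRange_apply (hf := Int.cast_zero),
          show (intToRat G (eelt H j.1)).coeff g = (((eelt H j.1).coeff g : ℤ) : ℚ) from
            Finsupp.mapRange_apply (hf := Int.cast_zero)])]
      exact delta_eelt H T hT1 hT2 i.2 j.2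
    rw [Matrix.of_apply]
    rw [show hTilde H * (MonoidAlgebra.single (i:G) (1:ℤ) - 1) = eelt H i.1 from rfl,
      show hTilde H * (MonoidAlgebra.single (j:G) (1:ℤ) - 1) = eelt H j.1 from rfl]
    rw [hdf, inv_mul_cancel_left₀ hcard0]
    rw [Matrix.add_apply, Matrix.one_apply]
    rw [show (Matrix.replicateCol Unit (fun _ => (1:ℚ)) * Matrix.replicateRow Unit (fun _ => (1:ℚ))) i j
        = 1 from by
      rw [Matrix.mul_apply]
      simp]
    by_cases he : i = j
    · rw [if_pos he, if_pos (by rw [he]), add_comm]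
    · rw [if_neg he, if_neg (fun hc => he (Subtype.ext hc)), add_comm]
  rw [hmat, Matrix.det_one_add_replicateCol_mul_replicateRow]
  rw [index_eq H T hT1 hT2]
  rw [show dotProduct (fun _ : {x // x ∈ T} => (1:ℚ)) (fun _ => (1:ℚ))
      = (T.card : ℚ) from by
    rw [dotProduct]
    simp [Finset.card_univ]]
  push_cast
  ring

end
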